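/- Consider h(r,θ,t) = ω^{-1} r − f₁(r,θ,t) − ω^{p-1} d^{1/p} r^{1/p} v(θ) f(t), where f₁(r,θ,t) = ω^{p-1}G(d^{1/p} r^{1/p} v(θ), t). Then h(r,θ,t)/r → ω^{-1} > 0 as r → +∞ uniformly in (θ,t), ∂h/∂r(r,θ,t) > 0 for all sufficiently large r, and there exist h₀ > 0 and a function R(h,t,θ), of class C^{19} in (h,t), such that for every h ≥ h₀ the number r = ωh − R(h,t,θ) is the unique solution of h(r,θ,t) = h, and |R(h,t,θ)| ≤ ωh/2. -/

import Mathlib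

/-!
Energy conservation for the half-linear equation bounds `v`, and `f` is bounded by periodicity.
As `G` and `∂ₓG` are bounded, `h(r,θ,t) = r/ω + O(1 + r^{1/p})` and
`∂h/∂r = 1/ω + O(r^{1/p-1})` uniformly in `(θ,t)`. Hence `h(·,θ,t)` is strictly increasing beyond
some `r₀` and differs from `r/ω` by at most `A + |r|/(4ω)` for a constant `A`, so for large `h`
the equation `h(r,θ,t) = h` has exactly one solution, within `ωh/2` of `ωh`. Since `∂h/∂r > 0`
there, the implicit function theorem makes this solution `C¹⁹` in `(h,t)`.
-/

noncomputable def phi (p s : ℝ) : ℝ := |s| ^ (p - 2) * s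

noncomputable def pip (p : ℝ) : ℝ :=
  2 * Real.pi * (p - 1) ^ (1 / p) / (p * Real.sin (Real.pi / p))

noncomputable def iterD (F : ℝ → ℝ → ℝ) (i j : ℕ) (x t : ℝ) : ℝ :=
  iteratedDeriv i (fun y => iteratedDeriv j (F y) t) x

open Real Filter Set Topology Function

lemma pip_pos {p : ℝ} (hp : 1 < p) : 0 < pip p := by
  have hsin : 0 < sin (π / p) :=
    sin_pos_of_pos_of_lt_pi (div_pos pi_pos (by linarith)) (div_lt_self pi_pos hp)
  have : 0 < (p - 1) ^ (1 / p) := rpow_pos_of_pos (by linarith) _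
  unfold pip
  positivity

lemma Function.Periodic.exists_abs_le {f : ℝ → ℝ} {c : ℝ} (hf : Periodic f c) (hc : c ≠ 0)
    (hcont : Continuous f) : ∃ M, ∀ t, |f t| ≤ M :=
  ((hf.isBounded_of_continuous hc hcont).exists_norm_le).imp fun _ hM t => hM _ ⟨t, rfl⟩

@[simp] lemma iterD_zero_zero (F : ℝ → ℝ → ℝ) (x t : ℝ) : iterD F 0 0 x t = F x t := rfl

@[simp] lemma iterD_one_zero (F : ℝ → ℝ → ℝ) (x t : ℝ) : iterD F 1 0 x t = deriv (F · t) x := by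
  simp [iterD]

@[simp] lemma phi_zero (p : ℝ) : phi p 0 = 0 := by simp [phi]

lemma abs_phi {p : ℝ} (s : ℝ) (hs : s ≠ 0) : |phi p s| = |s| ^ (p - 1) := by
  rw [phi, abs_mul, abs_of_nonneg (by positivity), ← rpow_add_one (abs_ne_zero.2 hs)]
  ring_nf

lemma phi_conj_phi {p : ℝ} (hp : 1 < p) (s : ℝ) : phi (p / (p - 1)) (phi p s) = s := by
  rcases eq_or_ne s 0 with rfl | hs
  · simp
  have hs' : 0 < |s| := abs_pos.2 hs
  have hexp : (p - 1) * (p / (p - 1) - 2) + (p - 2) = 0 := by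
    field_simp [(sub_pos.2 hp).ne']; ring
  rw [phi, abs_phi s hs, phi, ← rpow_mul hs'.le, ← mul_assoc, ← rpow_add hs', hexp, rpow_zero,
    one_mul]

lemma hasDerivAt_abs_rpow_phi {p : ℝ} (hp : 1 < p) (y : ℝ) :
    HasDerivAt (fun s => |s| ^ p) (p * phi p y) y := by
  simpa only [phi, mul_assoc] using hasDerivAt_abs_rpow y hp

lemma hasDerivAt_max_zero_rpow {p : ℝ} (hp : 1 < p) (y : ℝ) :
    HasDerivAt (fun s => max s 0 ^ p) (p * phi p (max y 0)) y := by
  rcases lt_trichotomy y 0 with hy | rfl | hy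
  · have hloc : (fun s => max s 0 ^ p) =ᶠ[𝓝 y] fun _ => (0 : ℝ) ^ p := by
      filter_upwards [Iio_mem_nhds hy] with s hs using by rw [max_eq_right hs.le]
    simpa [max_eq_right hy.le] using (hasDerivAt_const y _).congr_of_eventuallyEq hloc
  · have hright : HasDerivWithinAt (fun s : ℝ => max s 0 ^ p) 0 (Ici 0) 0 := by
      have := (hasDerivAt_rpow_const (x := 0) (Or.inr hp.le)).hasDerivWithinAt (s := Ici (0 : ℝ))
      rw [zero_rpow (by linarith), mul_zero] at this
      exact this.congr (fun s (hs : 0 ≤ s) => by simp only [max_eq_left hs]) (by simp)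
    have hleft : HasDerivWithinAt (fun s : ℝ => max s 0 ^ p) 0 (Iic 0) 0 :=
      (hasDerivWithinAt_const (0 : ℝ) (Iic 0) ((0 : ℝ) ^ p)).congr
        (fun s (hs : s ≤ 0) => by simp only [max_eq_right hs]) (by simp)
    simpa [Iic_union_Ici] using hleft.union hright
  · have hloc : (fun s => max s 0 ^ p) =ᶠ[𝓝 y] fun s => s ^ p := by
      filter_upwards [Ioi_mem_nhds hy] with s hs using by rw [max_eq_left hs.le]
    have := (hasDerivAt_rpow_const (x := y) (Or.inl hy.ne')).congr_of_eventuallyEq hloc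
    rwa [max_eq_left hy.le, phi, abs_of_pos hy, ← rpow_add_one hy.ne',
      show p - 2 + 1 = p - 1 by ring]

lemma le_div_rpow_inv_of_mul_rpow_le {c x K p : ℝ} (hc : 0 < c) (hp : 0 < p) (hx : 0 ≤ x)
    (h : c * x ^ p ≤ K) : x ≤ (K / c) ^ p⁻¹ := by
  rw [le_rpow_inv_iff_of_pos hx (div_nonneg ((by positivity : 0 ≤ c * x ^ p).trans h) hc.le) hp,
    le_div_iff₀' hc]
  exact h

theorem exists_abs_le_of_halfLinear {p a b : ℝ} {v v' : ℝ → ℝ} (hp : 1 < p) (ha : 0 < a)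
    (hb : 0 < b) (hv : ∀ t, HasDerivAt v (v' t) t)
    (hode : ∀ t, HasDerivAt (fun s => phi p (v' s))
      (-a * phi p (max (v t) 0) + b * phi p (max (-v t) 0)) t) :
    ∃ M, ∀ t, |v t| ≤ M := by
  have hp0 : 0 < p := by linarith
  have hp1 : p - 1 ≠ 0 := by linarith
  have hq : 1 < p / (p - 1) := by rw [one_lt_div (by linarith)]; linarith
  -- The energy `(p-1)/p |v'|^p + a/p (v⁺)^p + b/p (v⁻)^p`, with the kinetic term written via
  -- `φ_p(v')`, which, unlike `v'`, is known to be differentiable.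
  set E : ℝ → ℝ := fun t => |phi p (v' t)| ^ (p / (p - 1)) / (p / (p - 1))
    + a / p * max (v t) 0 ^ p + b / p * max (-v t) 0 ^ p
  have hE' : ∀ t, HasDerivAt E 0 t := by
    intro t
    have hkin := (hasDerivAt_abs_rpow_phi hq _).comp t (hode t)
    have hplus := (hasDerivAt_max_zero_rpow hp _).comp t (hv t)
    have hminus := (hasDerivAt_max_zero_rpow hp _).comp t (hv t).neg
    rw [phi_conj_phi hp] at hkin
    refine (((hkin.div_const (p / (p - 1))).add (hplus.const_mul (a / p))).add
      (hminus.const_mul (b / p))).congr_deriv ?_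
    simp only [Pi.neg_apply]
    field_simp
    ring
  have hconst : ∀ t, E t = E 0 := fun t =>
    is_const_of_deriv_eq_zero (fun s => (hE' s).differentiableAt) (fun s => (hE' s).deriv) t 0
  refine ⟨(E 0 / (a / p)) ^ p⁻¹ + (E 0 / (b / p)) ^ p⁻¹, fun t => ?_⟩
  have hkin : 0 ≤ |phi p (v' t)| ^ (p / (p - 1)) / (p / (p - 1)) := by positivity
  have hplus : 0 ≤ a / p * max (v t) 0 ^ p := by positivity
  have hminus : 0 ≤ b / p * max (-v t) 0 ^ p := by positivity
  have hEt : |phi p (v' t)| ^ (p / (p - 1)) / (p / (p - 1))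
    + a / p * max (v t) 0 ^ p + b / p * max (-v t) 0 ^ p = E 0 := hconst t
  have h1 := le_div_rpow_inv_of_mul_rpow_le (by positivity) hp0 (le_max_right (v t) 0)
    (show a / p * max (v t) 0 ^ p ≤ E 0 by linarith)
  have h2 := le_div_rpow_inv_of_mul_rpow_le (by positivity) hp0 (le_max_right (-v t) 0)
    (show b / p * max (-v t) 0 ^ p ≤ E 0 by linarith)
  rw [abs_le]
  constructor <;> linarith [le_max_left (v t) 0, le_max_left (-v t) 0, le_max_right (v t) 0,
    le_max_right (-v t) 0]

lemma tendsto_rpow_sub_one_atTop {σ : ℝ} (hσ : σ < 1) :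
    Tendsto (fun x : ℝ => x ^ (σ - 1)) atTop (𝓝 0) := by
  simpa using tendsto_rpow_neg_atTop (y := 1 - σ) (by linarith)

lemma exists_mul_rpow_le_add_mul {σ : ℝ} (hσ₀ : 0 ≤ σ) (hσ : σ < 1) (B : ℝ) {ε : ℝ}
    (hε : 0 < ε) : ∃ A, ∀ x, 0 ≤ x → B * x ^ σ ≤ A + ε * x := by
  have hlim := ((tendsto_rpow_sub_one_atTop hσ).const_mul |B|).eventually
    (gt_mem_nhds (show |B| * 0 < ε by simpa using hε))
  obtain ⟨N, hN⟩ := eventually_atTop.1 hlim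
  refine ⟨|B| * max N 1 ^ σ, fun x hx => ?_⟩
  have hB : B * x ^ σ ≤ |B| * x ^ σ := by gcongr; exact le_abs_self B
  rcases le_total x (max N 1) with hxN | hxN
  · have : |B| * x ^ σ ≤ |B| * max N 1 ^ σ := by gcongr
    linarith [mul_nonneg hε.le hx]
  · have hx0 : 0 < x := lt_of_lt_of_le (by positivity) hxN
    have hsmall := hN x (le_of_max_le_left hxN)
    rw [rpow_sub_one hx0.ne', ← mul_div_assoc, div_lt_iff₀ hx0] at hsmall
    linarith [show 0 ≤ |B| * max N 1 ^ σ by positivity]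

theorem exists_abs_div_sub_lt_of_abs_sub_mul_le {ι : Type*} {F : ℝ → ι → ℝ} {a : ℝ}
    (hF : ∀ ε, 0 < ε → ∃ A, ∀ r i, |F r i - a * r| ≤ A + ε * |r|) :
    ∀ ε, 0 < ε → ∃ r₀, ∀ r, r₀ ≤ r → ∀ i, |F r i / r - a| < ε := by
  intro ε hε
  obtain ⟨A, hA⟩ := hF (ε / 2) (half_pos hε)
  refine ⟨2 * |A| / ε + 1, fun r hr i => ?_⟩
  have hA' : |A| < ε / 2 * r := by
    have := (div_lt_iff₀ hε).1 (lt_of_lt_of_le (lt_add_one _) hr)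
    linarith
  have hr0 : 0 < r := by linarith [show 0 ≤ 2 * |A| / ε by positivity]
  rw [show F r i / r - a = (F r i - a * r) / r by field_simp, abs_div, abs_of_pos hr0,
    div_lt_iff₀ hr0]
  have := hA r i
  rw [abs_of_pos hr0] at this
  linarith [le_abs_self A]

section NearlyLinear

variable {F : ℝ → ℝ} {ω A r₀ h : ℝ}

lemma lt_of_apply_eq_of_abs_sub_le (hω : 0 < ω)
    (hF : ∀ r, |F r - ω⁻¹ * r| ≤ A + ω⁻¹ / 4 * |r|) (hr₀ : 0 ≤ r₀)
    (hh : 5 / 4 * ω⁻¹ * r₀ + A < h) {r : ℝ} (hr : F r = h) : r₀ < r := by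
  by_contra! hle
  have hup := (abs_le.1 (hF r)).2
  have hω' : 0 < ω⁻¹ := inv_pos.2 hω
  rcases le_total 0 r with h0 | h0
  · rw [abs_of_nonneg h0] at hup
    nlinarith
  · rw [abs_of_nonpos h0] at hup
    nlinarith

lemma exists_apply_eq_of_abs_sub_le (hω : 0 < ω) (hFc : Continuous F)
    (hF : ∀ r, |F r - ω⁻¹ * r| ≤ A + ω⁻¹ / 4 * |r|) (hh : A ≤ h) : ∃ r, F r = h := by
  have hA : 0 ≤ A := by simpa using (abs_nonneg _).trans (hF 0)
  have hlow := (abs_le.1 (hF 0)).2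
  have hhA : 0 ≤ h + A := by linarith
  have hhigh := (abs_le.1 (hF (2 * ω * (h + A)))).1
  rw [abs_of_nonneg (by positivity)] at hhigh
  have hωω : ω⁻¹ * ω = 1 := inv_mul_cancel₀ hω.ne'
  exact intermediate_value_univ 0 (2 * ω * (h + A)) hFc
    ⟨by simp at hlow; linarith, by nlinarith⟩

lemma abs_sub_le_of_apply_eq_of_abs_sub_le (hω : 0 < ω)
    (hF : ∀ r, |F r - ω⁻¹ * r| ≤ A + ω⁻¹ / 4 * |r|) (hh : 8 * A ≤ h) {r : ℝ} (hr : F r = h) :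
    |ω * h - r| ≤ ω * h / 2 := by
  have hA : 0 ≤ A := by simpa using (abs_nonneg _).trans (hF 0)
  obtain ⟨hlow, hup⟩ := abs_le.1 (hF r)
  rw [hr] at hlow hup
  have hr0 : 0 ≤ r := by
    by_contra! hr0
    rw [abs_of_neg hr0] at hup
    nlinarith [inv_pos.2 hω]
  rw [abs_of_nonneg hr0] at hlow hup
  have hωω : ω * ω⁻¹ = 1 := mul_inv_cancel₀ hω.ne'
  rw [abs_le]
  constructor <;> nlinarith [mul_le_mul_of_nonneg_left hlow hω.le,
    mul_le_mul_of_nonneg_left hup hω.le]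

lemma apply_eq_iff_eq_invFun_of_abs_sub_le (hω : 0 < ω) (hFc : Continuous F)
    (hF : ∀ r, |F r - ω⁻¹ * r| ≤ A + ω⁻¹ / 4 * |r|) (hr₀ : 0 ≤ r₀)
    (hmono : StrictMonoOn F (Ici r₀)) (hh : 5 / 4 * ω⁻¹ * r₀ + A < h) (r : ℝ) :
    F r = h ↔ r = invFun F h := by
  have hsol : F (invFun F h) = h := invFun_eq (exists_apply_eq_of_abs_sub_le hω hFc hF
    (by nlinarith [inv_pos.2 hω]))
  refine ⟨fun hr => hmono.injOn ?_ ?_ (hr.trans hsol.symm), fun hr => hr ▸ hsol⟩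
  · exact (lt_of_apply_eq_of_abs_sub_le hω hF hr₀ hh hr).le
  · exact (lt_of_apply_eq_of_abs_sub_le hω hF hr₀ hh hsol).le

end NearlyLinear

theorem contDiffAt_of_eventually_unique_solution {E : Type*} [NormedAddCommGroup E]
    [NormedSpace ℝ E] [CompleteSpace E] {n : WithTop ℕ∞} {F g : ℝ × E → ℝ} {z : ℝ × E}
    {U : Set ℝ} (hn : n ≠ 0) (hF : ContDiffAt ℝ n F (g z, z.2))
    (hD : deriv (fun r => F (r, z.2)) (g z) ≠ 0) (hgz : F (g z, z.2) = z.1)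
    (hU : U ∈ 𝓝 (g z)) (huniq : ∀ᶠ y in 𝓝 z, ∀ r ∈ U, F (r, y.2) = y.1 → r = g y) :
    ContDiffAt ℝ n g z := by
  set Φ : (ℝ × E) × ℝ → ℝ := fun w => F (w.2, w.1.2) - w.1.1
  have hΦ : ContDiffAt ℝ n Φ (z, g z) :=
    (hF.comp (z, g z) (by fun_prop : ContDiffAt ℝ n (fun w : (ℝ × E) × ℝ => (w.2, w.1.2)) _)).sub
      (by fun_prop)
  set L := fderiv ℝ Φ (z, g z) ∘L ContinuousLinearMap.inr ℝ (ℝ × E) ℝ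
  have hL : L 1 = deriv (fun r => F (r, z.2)) (g z) := by
    have := ((hΦ.differentiableAt hn).hasFDerivAt.comp (g z)
      (hasFDerivAt_prodMk_right (𝕜 := ℝ) z (g z))).hasDerivAt.deriv
    rw [← this]
    exact deriv_sub_const (f := fun r => F (r, z.2)) z.1
  have hinv : L.IsInvertible := ⟨ContinuousLinearEquiv.unitsEquivAut ℝ (Units.mk0 _ (hL ▸ hD)),
    ContinuousLinearMap.ext_ring (by simp)⟩
  -- The implicit function `ψ` of `Φ = 0` solves the equation near `z` and stays in `U`,
  -- so uniqueness identifies it with `g`.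
  set ψ := hΦ.implicitFunction hn hinv
  have hψz : ψ z = g z := hΦ.implicitFunction_apply_self hn hinv
  have hψ : ContDiffAt ℝ n ψ z := hΦ.contDiffAt_implicitFunction hn hinv
  have hψU : ∀ᶠ y in 𝓝 z, ψ y ∈ U := hψ.continuousAt.preimage_mem_nhds (hψz ▸ hU)
  refine hψ.congr_of_eventuallyEq ?_
  filter_upwards [huniq, hψU, hΦ.eventually_apply_implicitFunction hn hinv] with y hy hyU hyΦ
  refine (hy _ hyU ?_).symm
  simp only [Φ, hgz, sub_self] at hyΦ
  exact sub_eq_zero.1 hyΦ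

theorem contDiffAt_invFun_of_abs_sub_le {F : ℝ → ℝ → ℝ} {ω A r₀ : ℝ} {n : WithTop ℕ∞}
    (hn : n ≠ 0) (hω : 0 < ω) (hF : ∀ r t, |F r t - ω⁻¹ * r| ≤ A + ω⁻¹ / 4 * |r|)
    (hr₀ : 0 ≤ r₀) (hcont : ∀ t, Continuous (F · t))
    (hmono : ∀ t, StrictMonoOn (F · t) (Ici r₀)) (hderiv : ∀ r, r₀ < r → ∀ t, deriv (F · t) r ≠ 0)
    (hsmooth : ∀ r, r₀ < r → ∀ t, ContDiffAt ℝ n (fun q : ℝ × ℝ => F q.1 q.2) (r, t))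
    {z : ℝ × ℝ} (hz : 5 / 4 * ω⁻¹ * r₀ + A < z.1) :
    ContDiffAt ℝ n (fun y : ℝ × ℝ => invFun (F · y.2) y.1) z := by
  have hiff := apply_eq_iff_eq_invFun_of_abs_sub_le hω (hcont z.2) (hF · z.2) hr₀ (hmono z.2) hz
  have hgt := lt_of_apply_eq_of_abs_sub_le hω (hF · z.2) hr₀ hz ((hiff _).2 rfl)
  refine contDiffAt_of_eventually_unique_solution (U := Ioi r₀) hn (hsmooth _ hgt z.2)
    (hderiv _ hgt z.2) ((hiff _).2 rfl) (Ioi_mem_nhds hgt) ?_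
  filter_upwards [(isOpen_lt continuous_const continuous_fst).mem_nhds hz] with y hy r _ hr
  exact (apply_eq_iff_eq_invFun_of_abs_sub_le hω (hcont y.2) (hF · y.2) hr₀ (hmono y.2) hy r).1 hr

noncomputable def hamiltonian (p ω d : ℝ) (G : ℝ → ℝ → ℝ) (v f : ℝ → ℝ) (r θ t : ℝ) : ℝ :=
  ω⁻¹ * r - ω ^ (p - 1) * G (d ^ (1 / p) * r ^ (1 / p) * v θ) t
    - ω ^ (p - 1) * d ^ (1 / p) * r ^ (1 / p) * v θ * f t

section Hamiltonian

variable {p ω d C Mv Mf : ℝ} {G : ℝ → ℝ → ℝ} {v f : ℝ → ℝ}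

lemma abs_hamiltonian_sub_le (hG : ∀ x t, |G x t| ≤ C) (hv : ∀ θ, |v θ| ≤ Mv)
    (hf : ∀ t, |f t| ≤ Mf) (r θ t : ℝ) :
    |hamiltonian p ω d G v f r θ t - ω⁻¹ * r|
      ≤ |ω ^ (p - 1)| * C + |ω ^ (p - 1) * d ^ (1 / p)| * (Mv * Mf) * |r| ^ (1 / p) := by
  have hvf : |v θ| * |f t| ≤ Mv * Mf :=
    mul_le_mul (hv θ) (hf t) (abs_nonneg _) ((abs_nonneg _).trans (hv θ))
  calc |hamiltonian p ω d G v f r θ t - ω⁻¹ * r|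
      = |ω ^ (p - 1) * G (d ^ (1 / p) * r ^ (1 / p) * v θ) t
          + ω ^ (p - 1) * d ^ (1 / p) * r ^ (1 / p) * (v θ * f t)| := by
        rw [hamiltonian, ← abs_neg]; congr 1; ring
    _ ≤ |ω ^ (p - 1)| * |G (d ^ (1 / p) * r ^ (1 / p) * v θ) t|
          + |ω ^ (p - 1) * d ^ (1 / p)| * |r ^ (1 / p)| * (|v θ| * |f t|) := by
        exact (abs_add_le _ _).trans_eq (by simp only [abs_mul])
    _ ≤ |ω ^ (p - 1)| * C + |ω ^ (p - 1) * d ^ (1 / p)| * |r| ^ (1 / p) * (Mv * Mf) := by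
        gcongr
        · exact hG _ _
        · exact abs_rpow_le_abs_rpow r _
    _ = _ := by ring

lemma exists_abs_hamiltonian_sub_le (hp : 1 < p) (hG : ∀ x t, |G x t| ≤ C)
    (hv : ∀ θ, |v θ| ≤ Mv) (hf : ∀ t, |f t| ≤ Mf) {ε : ℝ} (hε : 0 < ε) :
    ∃ A, ∀ r θ t, |hamiltonian p ω d G v f r θ t - ω⁻¹ * r| ≤ A + ε * |r| := by
  obtain ⟨A, hA⟩ := exists_mul_rpow_le_add_mul (σ := 1 / p) (by positivity)
    ((div_lt_one (by linarith)).2 hp) (|ω ^ (p - 1) * d ^ (1 / p)| * (Mv * Mf)) hε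
  exact ⟨|ω ^ (p - 1)| * C + A, fun r θ t =>
    (abs_hamiltonian_sub_le hG hv hf r θ t).trans (by linarith [hA |r| (abs_nonneg r)])⟩

lemma continuous_hamiltonian (hp : 0 < p) (hG : ∀ t, Continuous (G · t)) (θ t : ℝ) :
    Continuous (hamiltonian p ω d G v f · θ t) := by
  have hs : Continuous fun r : ℝ => r ^ (1 / p) := continuous_rpow_const (by positivity)
  have hGc : Continuous fun r : ℝ => G (d ^ (1 / p) * r ^ (1 / p) * v θ) t :=
    (hG t).comp ((continuous_const.mul hs).mul continuous_const)
  unfold hamiltonian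
  fun_prop

lemma contDiffAt_hamiltonian {n : WithTop ℕ∞} (hG : ContDiff ℝ n fun z : ℝ × ℝ => G z.1 z.2)
    (hf : ContDiff ℝ n f) {r : ℝ} (hr : 0 < r) (θ t : ℝ) :
    ContDiffAt ℝ n (fun q : ℝ × ℝ => hamiltonian p ω d G v f q.1 θ q.2) (r, t) := by
  have hs : ContDiffAt ℝ n (fun q : ℝ × ℝ => q.1 ^ (1 / p)) (r, t) :=
    (contDiffAt_rpow_const_of_ne (p := 1 / p) hr.ne').comp (r, t) contDiffAt_fst
  have hGc : ContDiffAt ℝ n (fun q : ℝ × ℝ => G (d ^ (1 / p) * q.1 ^ (1 / p) * v θ) q.2) (r, t) :=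
    hG.contDiffAt.comp (r, t)
    (((contDiffAt_const.mul hs).mul contDiffAt_const).prodMk contDiffAt_snd)
  have hfc := hf.contDiffAt.comp (r, t) contDiffAt_snd
  unfold hamiltonian
  exact ((contDiffAt_const.mul contDiffAt_fst).sub (contDiffAt_const.mul hGc)).sub
    (((contDiffAt_const.mul hs).mul contDiffAt_const).mul hfc)

lemma hasDerivAt_hamiltonian (hG : ∀ t, Differentiable ℝ (G · t)) {r : ℝ} (hr : 0 < r)
    (θ t : ℝ) :
    HasDerivAt (hamiltonian p ω d G v f · θ t)
      (ω⁻¹ - ω ^ (p - 1) * d ^ (1 / p) * v θ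
        * (deriv (G · t) (d ^ (1 / p) * r ^ (1 / p) * v θ) + f t) * (1 / p * r ^ (1 / p - 1)))
      r := by
  have hs := hasDerivAt_rpow_const (p := 1 / p) (Or.inl hr.ne')
  have hGc := ((hG t) _).hasDerivAt.comp r ((hs.const_mul (d ^ (1 / p))).mul_const (v θ))
  refine ((((hasDerivAt_id r).const_mul ω⁻¹).sub (hGc.const_mul (ω ^ (p - 1)))).sub
    (((hs.const_mul (ω ^ (p - 1) * d ^ (1 / p))).mul_const (v θ)).mul_const (f t))).congr_deriv ?_
  ring

lemma abs_deriv_hamiltonian_sub_le (hp : 0 < p) (hG : ∀ t, Differentiable ℝ (G · t))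
    (hGx : ∀ x t, |deriv (G · t) x| ≤ C) (hv : ∀ θ, |v θ| ≤ Mv) (hf : ∀ t, |f t| ≤ Mf)
    {r : ℝ} (hr : 0 < r) (θ t : ℝ) :
    |deriv (hamiltonian p ω d G v f · θ t) r - ω⁻¹|
      ≤ |ω ^ (p - 1) * d ^ (1 / p)| * Mv * (C + Mf) * (1 / p * r ^ (1 / p - 1)) := by
  rw [(hasDerivAt_hamiltonian hG hr θ t).deriv, sub_sub_cancel_left, abs_neg, abs_mul, abs_mul,
    abs_mul, abs_of_pos (by positivity : 0 < 1 / p * r ^ (1 / p - 1))]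
  gcongr
  · exact mul_nonneg (abs_nonneg _) ((abs_nonneg _).trans (hv θ))
  · exact hv θ
  · exact (abs_add_le _ _).trans (add_le_add (hGx _ _) (hf t))

lemma exists_deriv_hamiltonian_pos (hp : 1 < p) (hω : 0 < ω)
    (hG : ∀ t, Differentiable ℝ (G · t)) (hGx : ∀ x t, |deriv (G · t) x| ≤ C)
    (hv : ∀ θ, |v θ| ≤ Mv) (hf : ∀ t, |f t| ≤ Mf) :
    ∃ r₀, 0 < r₀ ∧ ∀ r, r₀ ≤ r → ∀ θ t, 0 < deriv (hamiltonian p ω d G v f · θ t) r := by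
  set B := |ω ^ (p - 1) * d ^ (1 / p)| * Mv * (C + Mf) * (1 / p)
  have hlim := ((tendsto_rpow_sub_one_atTop ((div_lt_one (by linarith)).2 hp)).const_mul
    B).eventually (gt_mem_nhds (show B * 0 < ω⁻¹ by simpa using hω))
  obtain ⟨N, hN⟩ := eventually_atTop.1 hlim
  refine ⟨max N 1, by positivity, fun r hr θ t => ?_⟩
  have hr0 : 0 < r := lt_of_lt_of_le (by positivity) hr
  have := abs_le.1 (abs_deriv_hamiltonian_sub_le (ω := ω) (d := d) (show 0 < p by linarith)
    hG hGx hv hf hr0 θ t)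
  have := hN r (le_of_max_le_left hr)
  simp only [B] at this
  linarith

end Hamiltonian

theorem time_energy_exchange_general
    (p a₁ b₁ d ω C : ℝ) (v v' f : ℝ → ℝ) (G : ℝ → ℝ → ℝ) (ham : ℝ → ℝ → ℝ → ℝ)
    (hp : 2 ≤ p)
    (ha₁ : 0 < a₁) (hb₁ : 0 < b₁)
    (hω : 0 < ω)
    -- `v`
    (hv : ∀ t, HasDerivAt v (v' t) t)
    (hode : ∀ t, HasDerivAt (fun s => phi p (v' s))
      (-a₁ * phi p (max (v t) 0) + b₁ * phi p (max (-v t) 0)) t)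
    -- `f`, `G`
    (hf : ContDiff ℝ 23 f) (hfper : Function.Periodic f (2 * pip p))
    (hG : ContDiff ℝ 21 (fun z : ℝ × ℝ => G z.1 z.2))
    (hGbd : ∀ i j : ℕ, i + j ≤ 21 → ∀ x t : ℝ, |iterD G i j x t| ≤ C)
    -- the Hamiltonian
    (hham : ∀ r θ t : ℝ, ham r θ t
      = ω⁻¹ * r - ω ^ (p - 1) * G (d ^ (1 / p) * r ^ (1 / p) * v θ) t
        - ω ^ (p - 1) * d ^ (1 / p) * r ^ (1 / p) * v θ * f t) :
    (0 < ω⁻¹) ∧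
    (∀ ε : ℝ, 0 < ε → ∃ r₀ : ℝ, ∀ r : ℝ, r₀ ≤ r → ∀ θ t : ℝ,
      |ham r θ t / r - ω⁻¹| < ε) ∧
    (∃ r₀ : ℝ, ∀ r : ℝ, r₀ ≤ r → ∀ θ t : ℝ,
      0 < deriv (fun r' => ham r' θ t) r) ∧
    (∃ h₀ : ℝ, 0 < h₀ ∧ ∃ R : ℝ → ℝ → ℝ → ℝ,
      (∀ θ : ℝ, ContDiffOn ℝ 19 (fun z : ℝ × ℝ => R z.1 z.2 θ)
        (Set.Ici h₀ ×ˢ (Set.univ : Set ℝ))) ∧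
      ∀ hh : ℝ, h₀ ≤ hh → ∀ t θ : ℝ,
        |R hh t θ| ≤ ω * hh / 2 ∧
        ham (ω * hh - R hh t θ) θ t = hh ∧
        (∀ r : ℝ, ham r θ t = hh → r = ω * hh - R hh t θ)) := by
  have hp₁ : 1 < p := by linarith
  obtain ⟨Mv, hMv⟩ := exists_abs_le_of_halfLinear hp₁ ha₁ hb₁ hv hode
  obtain ⟨Mf, hMf⟩ := hfper.exists_abs_le (by linarith [pip_pos hp₁]) hf.continuous
  have hGb : ∀ x t, |G x t| ≤ C := fun x t => by simpa using hGbd 0 0 (by norm_num) x t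
  have hGx : ∀ x t, |deriv (G · t) x| ≤ C := fun x t => by simpa using hGbd 1 0 (by norm_num) x t
  have hGd : ∀ t, Differentiable ℝ (G · t) := fun t =>
    (hG.differentiable (by norm_num)).comp (differentiable_id.prodMk (differentiable_const t))
  obtain rfl : ham = hamiltonian p ω d G v f := funext fun r => funext fun θ => funext (hham r θ)
  have hcont : ∀ θ t, Continuous (hamiltonian p ω d G v f · θ t) :=
    continuous_hamiltonian (by linarith) fun t => (hGd t).continuous
  obtain ⟨A, hA⟩ := exists_abs_hamiltonian_sub_le (ω := ω) (d := d) hp₁ hGb hMv hMf (ε := ω⁻¹ / 4)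
    (by positivity)
  have hA₀ : 0 ≤ A := by simpa using (abs_nonneg _).trans (hA 0 0 0)
  obtain ⟨r₀, hr₀, hderiv⟩ := exists_deriv_hamiltonian_pos hp₁ hω hGd hGx hMv hMf
  have hmono : ∀ θ t, StrictMonoOn (hamiltonian p ω d G v f · θ t) (Ici r₀) := fun θ t =>
    strictMonoOn_of_deriv_pos (convex_Ici r₀) (hcont θ t).continuousOn fun r hr =>
      hderiv r (interior_Ici.subset hr).le θ t
  set h₁ := max (5 / 4 * ω⁻¹ * r₀ + A) (8 * A)
  have hh₁ : 5 / 4 * ω⁻¹ * r₀ + A ≤ h₁ := le_max_left _ _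
  have hh₁' : 8 * A ≤ h₁ := le_max_right _ _
  refine ⟨inv_pos.2 hω, fun ε hε => ?_, ⟨r₀, hderiv⟩, h₁ + 1, by linarith,
    fun hh t θ => ω * hh - invFun (hamiltonian p ω d G v f · θ t) hh, fun θ z hz => ?_,
    fun hh hh₀ t θ => ?_⟩
  · obtain ⟨r₁, hr₁⟩ := exists_abs_div_sub_lt_of_abs_sub_mul_le
      (F := fun r (i : ℝ × ℝ) => hamiltonian p ω d G v f r i.1 i.2)
      (fun ε hε => (exists_abs_hamiltonian_sub_le hp₁ hGb hMv hMf hε).imp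
        fun A hA r i => hA r i.1 i.2) ε hε
    exact ⟨r₁, fun r hr θ t => hr₁ r hr (θ, t)⟩
  · refine ((contDiffAt_const.mul contDiffAt_fst).sub (contDiffAt_invFun_of_abs_sub_le
      (F := fun r t => hamiltonian p ω d G v f r θ t) (by norm_num) hω (hA · θ) hr₀.le (hcont θ)
      (hmono θ) (fun r hr t => (hderiv r hr.le θ t).ne') (fun r hr t => contDiffAt_hamiltonian
        (hG.of_le (by norm_num)) (hf.of_le (by norm_num)) (hr₀.trans hr) θ t) ?_)).contDiffWithinAt
    linarith [hz.1.out]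
  · have hiff := apply_eq_iff_eq_invFun_of_abs_sub_le (h := hh) hω (hcont θ t) (hA · θ t) hr₀.le
      (hmono θ t) (by linarith)
    refine ⟨abs_sub_le_of_apply_eq_of_abs_sub_le hω (hA · θ t) (by linarith) ((hiff _).2 rfl),
      ?_, fun r hr => ?_⟩
    · rw [sub_sub_cancel]; exact (hiff _).2 rfl
    · rw [sub_sub_cancel]; exact (hiff r).1 hr

/-- For the Hamiltonian
`h(r,θ,t) = ω⁻¹ r − f₁(r,θ,t) − ω^{p-1} d^{1/p} r^{1/p} v(θ) f(t)`, where
`f₁(r,θ,t) = ω^{p-1} G(d^{1/p} r^{1/p} v(θ), t)`, one has `h/r → ω⁻¹ > 0` as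
`r → +∞` uniformly in `(θ,t)`, `∂h/∂r > 0` for all large `r`, and there are
`h₀ > 0` and a function `R(h,t,θ)`, `C^{19}` in `(h,t)`, such that for `h ≥ h₀`
the number `r = ωh − R(h,t,θ)` is the unique solution of `h(r,θ,t) = h`, with
`|R(h,t,θ)| ≤ ωh/2`. -/
theorem time_energy_exchange
    (p q a₁ b₁ d ω C : ℝ) (v v' f : ℝ → ℝ) (G : ℝ → ℝ → ℝ) (ham : ℝ → ℝ → ℝ → ℝ)
    (hp : 2 ≤ p) (hq : q = p / (p - 1))
    (ha₁ : 0 < a₁) (hb₁ : 0 < b₁)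
    (hab : a₁ ^ (-(1 : ℝ) / p) + b₁ ^ (-(1 : ℝ) / p) = 2)
    (hd : d = p / a₁) (hω : 0 < ω)
    -- `v`
    (hv : ∀ t, HasDerivAt v (v' t) t)
    (hode : ∀ t, HasDerivAt (fun s => phi p (v' s))
      (-a₁ * phi p (max (v t) 0) + b₁ * phi p (max (-v t) 0)) t)
    (hv0 : v 0 = (p - 1) ^ (1 / p)) (hv'0 : v' 0 = 0)
    -- `f`, `G`
    (hf : ContDiff ℝ 23 f) (hfper : Function.Periodic f (2 * pip p))
    (hG : ContDiff ℝ 21 (fun z : ℝ × ℝ => G z.1 z.2))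
    (hGper : ∀ x t, G x (t + 2 * pip p) = G x t)
    (hC : 0 < C)
    (hGbd : ∀ i j : ℕ, i + j ≤ 21 → ∀ x t : ℝ, |iterD G i j x t| ≤ C)
    -- the Hamiltonian
    (hham : ∀ r θ t : ℝ, ham r θ t
      = ω⁻¹ * r - ω ^ (p - 1) * G (d ^ (1 / p) * r ^ (1 / p) * v θ) t
        - ω ^ (p - 1) * d ^ (1 / p) * r ^ (1 / p) * v θ * f t) :
    (0 < ω⁻¹) ∧
    (∀ ε : ℝ, 0 < ε → ∃ r₀ : ℝ, ∀ r : ℝ, r₀ ≤ r → ∀ θ t : ℝ,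
      |ham r θ t / r - ω⁻¹| < ε) ∧
    (∃ r₀ : ℝ, ∀ r : ℝ, r₀ ≤ r → ∀ θ t : ℝ,
      0 < deriv (fun r' => ham r' θ t) r) ∧
    (∃ h₀ : ℝ, 0 < h₀ ∧ ∃ R : ℝ → ℝ → ℝ → ℝ,
      (∀ θ : ℝ, ContDiffOn ℝ 19 (fun z : ℝ × ℝ => R z.1 z.2 θ)
        (Set.Ici h₀ ×ˢ (Set.univ : Set ℝ))) ∧
      ∀ hh : ℝ, h₀ ≤ hh → ∀ t θ : ℝ,
        |R hh t θ| ≤ ω * hh / 2 ∧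
        ham (ω * hh - R hh t θ) θ t = hh ∧
        (∀ r : ℝ, ham r θ t = hh → r = ω * hh - R hh t θ)) :=
  time_energy_exchange_general p a₁ b₁ d ω C v v' f G ham hp ha₁ hb₁ hω hv hode hf hfper hG hGbd
    hham
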